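/- Let k be a field, let r be a positive integer, and let α : Fin r → ℝ satisfy α i > 0 for every i. There exists a valuation V on the fraction field FractionRing (MvPowerSeries (Fin r) k) with values in ℝ≥0 such that V(algebraMap f) = exp(−w_α(f)) for every nonzero f in MvPowerSeries (Fin r) k. -/

import Mathlib

/-!
Order the exponents by weight, breaking ties lexicographically. This is a linear order
compatible with addition, and since the weights are positive every weight sublevel set is
finite, so each nonzero series has a least exponent. The coefficient of `f * g` at the sum of
the least exponents of `f` and `g` is the product of their (nonzero) coefficients, which gives
`w_α(f g) = w_α(f) + w_α(g)`; the ultrametric inequality is immediate. Hence `exp (-w_α)` is a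
valuation on the power series ring whose support is `0`, and it extends to the fraction field.
-/

open scoped NNReal

/-- The α-weighted order `w_α(f) = inf { ∑ i, α i * β i : coeff β f ≠ 0 }` of a
multivariate formal power series. -/
noncomputable def wOrd {k : Type*} [Field k] {r : ℕ} (α : Fin r → ℝ)
    (f : MvPowerSeries (Fin r) k) : ℝ :=
  sInf {x : ℝ | ∃ β : Fin r →₀ ℕ, MvPowerSeries.coeff β f ≠ 0 ∧ x = ∑ i, α i * (β i : ℝ)}

namespace Finsupp

variable {σ : Type*} {w : σ → ℝ}

theorem finite_setOf_weight_le [Finite σ] (hw : ∀ i, 0 < w i) (B : ℝ) :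
    {β : σ →₀ ℕ | weight w β ≤ B}.Finite := by
  classical
  have := Fintype.ofFinite σ
  refine (Set.finite_Icc 0 (equivFunOnFinite.symm fun i => ⌊B / w i⌋₊)).subset fun β hβ => ?_
  refine ⟨zero_le, fun i => ?_⟩
  rw [coe_equivFunOnFinite_symm]
  refine Nat.le_floor ?_
  rw [le_div_iff₀ (hw i), ← nsmul_eq_mul]
  calc β i • w i ≤ ∑ j, β j • w j :=
        Finset.single_le_sum (fun j _ => nsmul_nonneg (hw j).le _) (Finset.mem_univ i)
    _ = weight w β := (weight_eq_sum w β).symm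
    _ ≤ B := hβ

noncomputable def weightLex (w : σ → ℝ) : (σ →₀ ℕ) →+ ℝ ×ₗ Lex (σ →₀ ℕ) where
  toFun β := toLex (weight w β, toLex β)
  map_zero' := by rw [map_zero, toLex_zero]; rfl
  map_add' β γ := by rw [map_add, toLex_add]; rfl

theorem weightLex_injective (w : σ → ℝ) : Function.Injective (weightLex w) :=
  fun _ _ h => toLex.injective (congrArg (fun x => (ofLex x).2) h)

variable [LinearOrder σ]

theorem weight_le_of_weightLex_le {β γ : σ →₀ ℕ} (h : weightLex w β ≤ weightLex w γ) :
    weight w β ≤ weight w γ :=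
  Prod.Lex.monotone_fst _ _ h

theorem weightLex_lt_of_weight_lt {β γ : σ →₀ ℕ} (h : weight w β < weight w γ) :
    weightLex w β < weightLex w γ :=
  Prod.Lex.toLex_lt_toLex.mpr (Or.inl h)

end Finsupp

open Finsupp

namespace MvPowerSeries

variable {σ R : Type*} [Semiring R]

theorem exists_add_eq_of_coeff_mul_ne_zero {f g : MvPowerSeries σ R} {u : σ →₀ ℕ}
    (h : coeff u (f * g) ≠ 0) : ∃ a b, a + b = u ∧ coeff a f ≠ 0 ∧ coeff b g ≠ 0 := by
  classical
  rw [coeff_mul] at h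
  obtain ⟨⟨a, b⟩, hab, hne⟩ := Finset.exists_ne_zero_of_sum_ne_zero h
  exact ⟨a, b, Finset.HasAntidiagonal.mem_antidiagonal.mp hab, left_ne_zero_of_mul hne,
    right_ne_zero_of_mul hne⟩

theorem coeff_add_mul_of_forall_le {Γ : Type*} [AddCommMonoid Γ] [LinearOrder Γ]
    [IsOrderedCancelAddMonoid Γ] (φ : (σ →₀ ℕ) →+ Γ) (hφ : Function.Injective φ)
    {f g : MvPowerSeries σ R} {β γ : σ →₀ ℕ}
    (hβ : ∀ u, coeff u f ≠ 0 → φ β ≤ φ u) (hγ : ∀ v, coeff v g ≠ 0 → φ γ ≤ φ v) :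
    coeff (β + γ) (f * g) = coeff β f * coeff γ g := by
  classical
  rw [coeff_mul]
  refine Finset.sum_eq_single (β, γ) (fun ⟨u, v⟩ huv hne => ?_) (by simp)
  by_contra h
  have hu := left_ne_zero_of_mul h
  have hv := right_ne_zero_of_mul h
  have hsum : φ β + φ γ = φ u + φ v := by
    rw [← map_add, ← map_add, Finset.HasAntidiagonal.mem_antidiagonal.mp huv]
  obtain ⟨h1, h2⟩ := (add_eq_add_iff_eq_and_eq (hβ u hu) (hγ v hv)).mp hsum
  exact hne (Prod.ext (hφ h1).symm (hφ h2).symm)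

end MvPowerSeries


namespace MvPowerSeries

variable {σ R : Type*} [Semiring R]

theorem exists_forall_weightLex_le [Finite σ] [LinearOrder σ] {w : σ → ℝ} (hw : ∀ i, 0 < w i)
    {f : MvPowerSeries σ R} (hf : f ≠ 0) :
    ∃ β, coeff β f ≠ 0 ∧ ∀ u, coeff u f ≠ 0 → weightLex w β ≤ weightLex w u := by
  obtain ⟨β₀, hβ₀⟩ := (ne_zero_iff_exists_coeff_ne_zero f).mp hf
  set T := {u | coeff u f ≠ 0 ∧ weight w u ≤ weight w β₀}
  have hT : T.Finite := (finite_setOf_weight_le hw _).subset fun u hu => hu.2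
  obtain ⟨β, ⟨hβ, hββ₀⟩, hmin⟩ := T.exists_min_image (weightLex w) hT ⟨β₀, hβ₀, le_rfl⟩
  refine ⟨β, hβ, fun u hu => ?_⟩
  by_cases huβ₀ : weight w u ≤ weight w β₀
  · exact hmin u ⟨hu, huβ₀⟩
  · exact (weightLex_lt_of_weight_lt (hββ₀.trans_lt (not_le.mp huβ₀))).le

end MvPowerSeries

section WeightedOrder

open MvPowerSeries

variable {k : Type*} [Field k] {r : ℕ} {α : Fin r → ℝ} {f g : MvPowerSeries (Fin r) k}

theorem wOrd_eq_weight {β : Fin r →₀ ℕ} (hβ : coeff β f ≠ 0)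
    (hmin : ∀ u, coeff u f ≠ 0 → weight α β ≤ weight α u) : wOrd α f = weight α β := by
  have weight_eq (u : Fin r →₀ ℕ) : weight α u = ∑ i, α i * (u i : ℝ) := by
    simp only [weight_eq_sum, nsmul_eq_mul, mul_comm]
  refine IsLeast.csInf_eq ⟨⟨β, hβ, weight_eq β⟩, ?_⟩
  rintro _ ⟨u, hu, rfl⟩
  exact (hmin u hu).trans_eq (weight_eq u)

theorem exists_wOrd_eq_weight (hα : ∀ i, 0 < α i) (hf : f ≠ 0) :
    ∃ β, coeff β f ≠ 0 ∧ wOrd α f = weight α β ∧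
      ∀ u, coeff u f ≠ 0 → weightLex α β ≤ weightLex α u := by
  obtain ⟨β, hβ, hmin⟩ := exists_forall_weightLex_le hα hf
  exact ⟨β, hβ, wOrd_eq_weight hβ fun u hu => weight_le_of_weightLex_le (hmin u hu), hmin⟩

theorem wOrd_le_weight (hα : ∀ i, 0 < α i) {u : Fin r →₀ ℕ} (hu : coeff u f ≠ 0) :
    wOrd α f ≤ weight α u := by
  obtain ⟨β, -, hfβ, hmin⟩ := exists_wOrd_eq_weight hα (ne_of_apply_ne (coeff u) hu)
  exact hfβ ▸ weight_le_of_weightLex_le (hmin u hu)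

theorem wOrd_mul (hα : ∀ i, 0 < α i) (hf : f ≠ 0) (hg : g ≠ 0) :
    wOrd α (f * g) = wOrd α f + wOrd α g := by
  obtain ⟨β, hβ, hfβ, hβmin⟩ := exists_wOrd_eq_weight hα hf
  obtain ⟨γ, hγ, hgγ, hγmin⟩ := exists_wOrd_eq_weight hα hg
  have hcoeff := coeff_add_mul_of_forall_le _ (weightLex_injective α) hβmin hγmin
  rw [hfβ, hgγ, ← map_add]
  refine wOrd_eq_weight (hcoeff ▸ mul_ne_zero hβ hγ) fun u hu => ?_
  obtain ⟨a, b, rfl, ha, hb⟩ := exists_add_eq_of_coeff_mul_ne_zero hu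
  rw [map_add, map_add]
  exact add_le_add (weight_le_of_weightLex_le (hβmin a ha))
    (weight_le_of_weightLex_le (hγmin b hb))

theorem wOrd_one (hα : ∀ i, 0 < α i) : wOrd α (1 : MvPowerSeries (Fin r) k) = 0 := by
  have h := wOrd_mul hα (one_ne_zero (α := MvPowerSeries (Fin r) k)) one_ne_zero
  rw [one_mul] at h
  linarith

theorem min_wOrd_le_wOrd_add (hα : ∀ i, 0 < α i) (hfg : f + g ≠ 0) :
    min (wOrd α f) (wOrd α g) ≤ wOrd α (f + g) := by
  obtain ⟨u, hu, hfgu, -⟩ := exists_wOrd_eq_weight hα hfg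
  rw [hfgu]
  rw [map_add] at hu
  by_cases hfu : coeff u f = 0
  · rw [hfu, zero_add] at hu
    exact min_le_of_right_le (wOrd_le_weight hα hu)
  · exact min_le_of_left_le (wOrd_le_weight hα hfu)

end WeightedOrder

section MonomialValuation

variable {k : Type*} [Field k] {r : ℕ} {α : Fin r → ℝ}

open Classical in
noncomputable def monomialValuation (hα : ∀ i, 0 < α i) :
    Valuation (MvPowerSeries (Fin r) k) ℝ≥0 where
  -- the `if` is needed because `wOrd α 0 = sInf ∅ = 0`
  toFun f := if f = 0 then 0 else (Real.exp (-wOrd α f)).toNNReal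
  map_zero' := if_pos rfl
  map_one' := by simp [wOrd_one hα]
  map_mul' f g := by
    by_cases hf : f = 0
    · simp [hf]
    by_cases hg : g = 0
    · simp [hg]
    rw [if_neg (mul_ne_zero hf hg), if_neg hf, if_neg hg, wOrd_mul hα hf hg, neg_add,
      Real.exp_add, Real.toNNReal_mul (Real.exp_pos _).le]
  map_add_le_max' f g := by
    rcases eq_or_ne f 0 with rfl | hf
    · rw [zero_add]; exact le_max_right _ _
    rcases eq_or_ne g 0 with rfl | hg
    · rw [add_zero]; exact le_max_left _ _
    by_cases hfg : f + g = 0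
    · simp [hfg]
    have expNeg_anti : Antitone fun x => (Real.exp (-x)).toNNReal :=
      Real.toNNReal_monotone.comp_antitone (Real.exp_monotone.comp_antitone fun _ _ => neg_le_neg)
    simp only [if_neg hf, if_neg hg, if_neg hfg]
    calc (Real.exp (-wOrd α (f + g))).toNNReal
        ≤ (Real.exp (-min (wOrd α f) (wOrd α g))).toNNReal :=
          expNeg_anti (min_wOrd_le_wOrd_add hα hfg)
      _ = max (Real.exp (-wOrd α f)).toNNReal (Real.exp (-wOrd α g)).toNNReal :=
          expNeg_anti.map_min

theorem monomialValuation_apply (hα : ∀ i, 0 < α i) {f : MvPowerSeries (Fin r) k} (hf : f ≠ 0) :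
    monomialValuation hα f = (Real.exp (-wOrd α f)).toNNReal :=
  if_neg hf

end MonomialValuation

theorem exists_monomial_valuation_fractionField_general
    (k : Type*) [Field k] (r : ℕ) (α : Fin r → ℝ) (hα : ∀ i, 0 < α i) :
    ∃ V : Valuation (FractionRing (MvPowerSeries (Fin r) k)) ℝ≥0,
      ∀ f : MvPowerSeries (Fin r) k, f ≠ 0 →
        V (algebraMap (MvPowerSeries (Fin r) k) (FractionRing (MvPowerSeries (Fin r) k)) f) =
          Real.toNNReal (Real.exp (-(wOrd α f))) := by
  have hsupp : nonZeroDivisors _ ≤ (monomialValuation (k := k) hα).supp.primeCompl := by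
    intro x hx
    rw [Ideal.mem_primeCompl_iff, Valuation.mem_supp_iff,
      monomialValuation_apply hα (nonZeroDivisors.ne_zero hx)]
    positivity
  refine ⟨(monomialValuation (k := k) hα).extendToLocalization hsupp _, fun f hf => ?_⟩
  rw [Valuation.extendToLocalization_apply_map_apply, monomialValuation_apply hα hf]

/-- **The monomial valuation on the fraction field (Proposition 2.4.4(2)).**  Let `k` be
a field, `r ≥ 1`, and let `α : Fin r → ℝ` have positive entries.  There is a valuation
`V` on the fraction field of `MvPowerSeries (Fin r) k`, with values in `ℝ≥0`, such that
`V f = exp (−w_α(f))` for every nonzero power series `f`. -/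
theorem exists_monomial_valuation_fractionField
    (k : Type*) [Field k] (r : ℕ) (hr : 0 < r) (α : Fin r → ℝ) (hα : ∀ i, 0 < α i) :
    ∃ V : Valuation (FractionRing (MvPowerSeries (Fin r) k)) ℝ≥0,
      ∀ f : MvPowerSeries (Fin r) k, f ≠ 0 →
        V (algebraMap (MvPowerSeries (Fin r) k) (FractionRing (MvPowerSeries (Fin r) k)) f) =
          Real.toNNReal (Real.exp (-(wOrd α f))) :=
  exists_monomial_valuation_fractionField_general k r α hα
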